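/- arXiv:2303.12645 — 4 statements merged into one kernel-verified Lean document; each statement's English description precedes it below -/
import Mathlib

section
/- For every integer N ≥ 1, for μ-almost every pair (f,g) ∈ E_N × E_N the set {(φ,ψ) ∈ [0,2π) × [0,2π) : f(φ) = g(ψ)} is finite. -/
open MeasureTheory Real
open scoped ENNReal

noncomputable section
set_option synthInstance.maxSize 2000
set_option maxHeartbeats 1000000

/-- Half of the coefficient data of a trigonometric plane curve of degree ≤ N:
constant term together with cosine coefficients `a₀, a₁, …, a_N`, and sine
coefficients `b₁, …, b_N`. -/
abbrev HalfCoeff (N : ℕ) := (Fin (N + 1) → ℝ) × (Fin N → ℝ)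

/-- The coefficient space `E_N × (second copy for y)` of trigonometric plane
curves of degree ≤ N, identified with ℝ^{4N+2}. -/
abbrev Coeff (N : ℕ) := HalfCoeff N × HalfCoeff N

/-- One coordinate function of a trigonometric curve:
`a₀ + Σ_{j=1}^N (a_j cos jφ + b_j sin jφ)`. -/
def coordFun (N : ℕ) (h : HalfCoeff N) (φ : ℝ) : ℝ :=
  h.1 0 + ∑ j : Fin N,
    (h.1 j.succ * Real.cos (((j : ℕ) + 1 : ℝ) * φ) +
      h.2 j * Real.sin (((j : ℕ) + 1 : ℝ) * φ))

/-- The trigonometric plane curve `ℝ → ℝ²` with coefficients `c`. -/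
def curve (N : ℕ) (c : Coeff N) (φ : ℝ) : ℝ × ℝ :=
  (coordFun N c.1 φ, coordFun N c.2 φ)

/-- Squared L₂ norm of a curve:
`2(a₀² + ã₀²) + Σ_{j=1}^N (a_j² + b_j² + ã_j² + b̃_j²)`. -/
def sqNormL2 (N : ℕ) (c : Coeff N) : ℝ :=
  2 * ((c.1.1 0) ^ 2 + (c.2.1 0) ^ 2) +
    ∑ j : Fin N,
      ((c.1.1 j.succ) ^ 2 + (c.1.2 j) ^ 2 + (c.2.1 j.succ) ^ 2 + (c.2.2 j) ^ 2)

/-- The closed ball `B(N,R)` of radius `R` about `0` in the L₂ norm. -/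
def ballL2 (N : ℕ) (R : ℝ) : Set (Coeff N) := {c | sqNormL2 N c ≤ R ^ 2}

/-- The set of intersection parameter pairs
`{(φ,ψ) ∈ [0,2π) × [0,2π) : f(φ) = g(ψ)}`. -/
def interParams (N : ℕ) (c d : Coeff N) : Set (ℝ × ℝ) :=
  {p | p.1 ∈ Set.Ico 0 (2 * π) ∧ p.2 ∈ Set.Ico 0 (2 * π) ∧
    curve N c p.1 = curve N d p.2}


/-- derivative of `coordFun` -/
def coordDeriv (N : ℕ) (h : HalfCoeff N) (t : ℝ) : ℝ :=
  ∑ j : Fin N,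
    (-(h.1 j.succ * (((j : ℕ) + 1 : ℝ)) * Real.sin (((j : ℕ) + 1 : ℝ) * t)) +
      h.2 j * (((j : ℕ) + 1 : ℝ)) * Real.cos (((j : ℕ) + 1 : ℝ) * t))

lemma hasDerivAt_coordFun (N : ℕ) (h : HalfCoeff N) (t : ℝ) :
    HasDerivAt (coordFun N h) (coordDeriv N h t) t := by
  unfold coordFun coordDeriv
  have : HasDerivAt (fun φ : ℝ => h.1 0 + ∑ j : Fin N,
      (h.1 j.succ * Real.cos (((j : ℕ) + 1 : ℝ) * φ) +
        h.2 j * Real.sin (((j : ℕ) + 1 : ℝ) * φ)))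
      (0 + ∑ j : Fin N,
        (h.1 j.succ * (-Real.sin (((j : ℕ) + 1 : ℝ) * t) * (((j : ℕ) + 1 : ℝ))) +
          h.2 j * (Real.cos (((j : ℕ) + 1 : ℝ) * t) * (((j : ℕ) + 1 : ℝ))))) t := by
    apply HasDerivAt.add (hasDerivAt_const _ _)
    apply HasDerivAt.fun_sum
    intro j _
    have hc : HasDerivAt (fun φ : ℝ => Real.cos (((j : ℕ) + 1 : ℝ) * φ))
        (-Real.sin (((j : ℕ) + 1 : ℝ) * t) * (((j : ℕ) + 1 : ℝ))) t := by
      simpa [Function.comp_def] using (Real.hasDerivAt_cos (((j : ℕ) + 1 : ℝ) * t)).comp t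
        ((hasDerivAt_id t).const_mul (((j : ℕ) + 1 : ℝ)))
    have hs : HasDerivAt (fun φ : ℝ => Real.sin (((j : ℕ) + 1 : ℝ) * φ))
        (Real.cos (((j : ℕ) + 1 : ℝ) * t) * (((j : ℕ) + 1 : ℝ))) t := by
      simpa [Function.comp_def] using (Real.hasDerivAt_sin (((j : ℕ) + 1 : ℝ) * t)).comp t
        ((hasDerivAt_id t).const_mul (((j : ℕ) + 1 : ℝ)))
    exact (hc.const_mul _).add (hs.const_mul _)
  convert this using 1
  rw [zero_add]
  congr 1
  funext j
  ring

lemma continuous_coordFun (N : ℕ) :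
    Continuous (fun q : HalfCoeff N × ℝ => coordFun N q.1 q.2) := by
  unfold coordFun
  apply Continuous.add
  · exact (continuous_apply 0).comp (continuous_fst.fst)
  · apply continuous_finset_sum
    intro j _
    apply Continuous.add
    · exact (((continuous_apply j.succ).comp continuous_fst.fst).mul
        (Real.continuous_cos.comp (continuous_const.mul continuous_snd)))
    · exact (((continuous_apply j).comp continuous_fst.snd).mul
        (Real.continuous_sin.comp (continuous_const.mul continuous_snd)))

lemma continuous_coordDeriv (N : ℕ) :
    Continuous (fun q : HalfCoeff N × ℝ => coordDeriv N q.1 q.2) := by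
  unfold coordDeriv
  apply continuous_finset_sum
  intro j _
  apply Continuous.add
  · exact ((((continuous_apply j.succ).comp continuous_fst.fst).mul
      continuous_const).mul
      (Real.continuous_sin.comp (continuous_const.mul continuous_snd))).neg
  · exact (((continuous_apply j).comp continuous_fst.snd).mul
      continuous_const).mul
      (Real.continuous_cos.comp (continuous_const.mul continuous_snd))

lemma contDiff_coordFun (N : ℕ) (h : HalfCoeff N) : ContDiff ℝ (⊤ : ℕ∞) (coordFun N h) := by
  unfold coordFun
  apply ContDiff.add contDiff_const
  apply ContDiff.sum
  intro j _
  exact ((contDiff_const.mul (Real.contDiff_cos.comp (contDiff_const.mul contDiff_id))).add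
    (contDiff_const.mul (Real.contDiff_sin.comp (contDiff_const.mul contDiff_id))))

/-- the continuous linear map `(u,w) ↦ (a u + b w, c u + d w)` on `ℝ × ℝ`. -/
def mk2 (a b c d : ℝ) : (ℝ × ℝ) →L[ℝ] (ℝ × ℝ) :=
  (a • ContinuousLinearMap.fst ℝ ℝ ℝ + b • ContinuousLinearMap.snd ℝ ℝ ℝ).prod
    (c • ContinuousLinearMap.fst ℝ ℝ ℝ + d • ContinuousLinearMap.snd ℝ ℝ ℝ)

@[simp] lemma mk2_apply (a b c d : ℝ) (p : ℝ × ℝ) :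
    mk2 a b c d p = (a * p.1 + b * p.2, c * p.1 + d * p.2) := by
  simp [mk2, smul_eq_mul]

lemma mk2_det (a b c d : ℝ) : (mk2 a b c d).det = a * d - b * c := by
  have : (mk2 a b c d).det = LinearMap.det ((mk2 a b c d) : (ℝ × ℝ) →ₗ[ℝ] (ℝ × ℝ)) := rfl
  rw [this, ← LinearMap.det_toMatrix (Module.Basis.finTwoProd ℝ), Matrix.det_fin_two]
  simp [LinearMap.toMatrix_apply, Module.Basis.finTwoProd_zero, Module.Basis.finTwoProd_one,
    Module.Basis.coe_finTwoProd_repr]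

/-- if the determinant is nonzero, `mk2 a b c d` is a linear equivalence. -/
def mk2Equiv (a b c d : ℝ) (h : a * d - b * c ≠ 0) : (ℝ × ℝ) ≃L[ℝ] (ℝ × ℝ) :=
  ContinuousLinearEquiv.equivOfInverse (mk2 a b c d)
    (mk2 (d / (a * d - b * c)) (-b / (a * d - b * c)) (-c / (a * d - b * c))
      (a / (a * d - b * c)))
    (fun p => by
      simp only [mk2_apply]
      obtain ⟨u, w⟩ := p
      ext <;> simp only [div_mul_eq_mul_div, mul_div_assoc', ← add_div, div_eq_iff h] <;> ring)
    (fun p => by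
      simp only [mk2_apply]
      obtain ⟨u, w⟩ := p
      ext <;> simp only [div_mul_eq_mul_div, mul_div_assoc', ← add_div, div_eq_iff h] <;> ring)

@[simp] lemma mk2Equiv_coe (a b c d : ℝ) (h : a * d - b * c ≠ 0) :
    (mk2Equiv a b c d h : (ℝ × ℝ) →L[ℝ] (ℝ × ℝ)) = mk2 a b c d := by
  ext p <;> simp [mk2Equiv]

/-- difference map of a pair of curves -/
def Hmap (N : ℕ) (x : Coeff N × Coeff N) (p : ℝ × ℝ) : ℝ × ℝ :=
  curve N x.2 p.2 - curve N x.1 p.1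

/-- the Jacobian determinant (up to sign) of `Hmap` -/
def Dfun (N : ℕ) (x : Coeff N × Coeff N) (p : ℝ × ℝ) : ℝ :=
  coordDeriv N x.1.1 p.1 * coordDeriv N x.2.2 p.2 -
    coordDeriv N x.1.2 p.1 * coordDeriv N x.2.1 p.2

/-- explicit derivative of `Hmap` -/
def Lmap (N : ℕ) (x : Coeff N × Coeff N) (p : ℝ × ℝ) : (ℝ × ℝ) →L[ℝ] (ℝ × ℝ) :=
  mk2 (-(coordDeriv N x.1.1 p.1)) (coordDeriv N x.2.1 p.2)
    (-(coordDeriv N x.1.2 p.1)) (coordDeriv N x.2.2 p.2)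

lemma Lmap_det (N : ℕ) (x : Coeff N × Coeff N) (p : ℝ × ℝ) :
    (Lmap N x p).det = -(Dfun N x p) := by
  rw [Lmap, mk2_det, Dfun]; ring

lemma hasFDerivAt_Hmap (N : ℕ) (x : Coeff N × Coeff N) (p : ℝ × ℝ) :
    HasFDerivAt (Hmap N x) (Lmap N x p) p := by
  have h1 : ∀ (h : HalfCoeff N), HasFDerivAt (fun q : ℝ × ℝ => coordFun N h q.1)
      ((coordDeriv N h p.1) • (ContinuousLinearMap.fst ℝ ℝ ℝ)) p :=
    fun h => (hasDerivAt_coordFun N h p.1).comp_hasFDerivAt p (hasFDerivAt_fst)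
  have h2 : ∀ (h : HalfCoeff N), HasFDerivAt (fun q : ℝ × ℝ => coordFun N h q.2)
      ((coordDeriv N h p.2) • (ContinuousLinearMap.snd ℝ ℝ ℝ)) p :=
    fun h => (hasDerivAt_coordFun N h p.2).comp_hasFDerivAt p (hasFDerivAt_snd)
  have key := (((h2 x.2.1).sub (h1 x.1.1)).prodMk ((h2 x.2.2).sub (h1 x.1.2)))
  have hL : Lmap N x p =
      ((coordDeriv N x.2.1 p.2 • ContinuousLinearMap.snd ℝ ℝ ℝ -
          coordDeriv N x.1.1 p.1 • ContinuousLinearMap.fst ℝ ℝ ℝ).prod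
        (coordDeriv N x.2.2 p.2 • ContinuousLinearMap.snd ℝ ℝ ℝ -
          coordDeriv N x.1.2 p.1 • ContinuousLinearMap.fst ℝ ℝ ℝ)) := by
    apply ContinuousLinearMap.ext
    intro q
    simp [Lmap, ContinuousLinearMap.prod_apply, smul_eq_mul]
    constructor <;> ring
  rw [hL]
  exact key

lemma contDiff_Hmap (N : ℕ) (x : Coeff N × Coeff N) : ContDiff ℝ (⊤ : ℕ∞) (Hmap N x) := by
  have h1 : ∀ (h : HalfCoeff N), ContDiff ℝ (⊤ : ℕ∞) (fun q : ℝ × ℝ => coordFun N h q.1) :=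
    fun h => (contDiff_coordFun N h).comp contDiff_fst
  have h2 : ∀ (h : HalfCoeff N), ContDiff ℝ (⊤ : ℕ∞) (fun q : ℝ × ℝ => coordFun N h q.2) :=
    fun h => (contDiff_coordFun N h).comp contDiff_snd
  have : Hmap N x = fun q : ℝ × ℝ =>
      ((coordFun N x.2.1 q.2 - coordFun N x.1.1 q.1, coordFun N x.2.2 q.2 - coordFun N x.1.2 q.1) : ℝ × ℝ) := by
    funext q; simp [Hmap, curve, Prod.sub_def]
  rw [this]
  exact ((h2 x.2.1).sub (h1 x.1.1)).prodMk ((h2 x.2.2).sub (h1 x.1.2))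

/-- local injectivity at points with nonvanishing Jacobian -/
lemma exists_injOn_Hmap (N : ℕ) (x : Coeff N × Coeff N) (p : ℝ × ℝ)
    (h : Dfun N x p ≠ 0) : ∃ s ∈ nhds p, Set.InjOn (Hmap N x) s := by
  have hdet : (-(coordDeriv N x.1.1 p.1)) * (coordDeriv N x.2.2 p.2) -
      (coordDeriv N x.2.1 p.2) * (-(coordDeriv N x.1.2 p.1)) ≠ 0 := by
    intro h0; apply h; rw [Dfun]; linarith [h0]
  set e := mk2Equiv _ _ _ _ hdet
  have hL : Lmap N x p = (e : (ℝ × ℝ) →L[ℝ] (ℝ × ℝ)) := by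
    rw [mk2Equiv_coe]; rfl
  have hs : HasStrictFDerivAt (Hmap N x) (e : (ℝ × ℝ) →L[ℝ] (ℝ × ℝ)) p := by
    have := ((contDiff_Hmap N x).contDiffAt (x := p)).hasStrictFDerivAt (by simp)
    rwa [(hasFDerivAt_Hmap N x p).fderiv, hL] at this
  refine ⟨(hs.toOpenPartialHomeomorph (Hmap N x)).source,
    (hs.toOpenPartialHomeomorph (Hmap N x)).open_source.mem_nhds hs.mem_toOpenPartialHomeomorph_source, ?_⟩
  have := (hs.toOpenPartialHomeomorph (Hmap N x)).injOn
  rwa [hs.toOpenPartialHomeomorph_coe] at this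

/-- the square `[0,2π] × [0,2π]` -/
def Qsq : Set (ℝ × ℝ) := Set.Icc (0:ℝ) (2 * π) ×ˢ Set.Icc (0:ℝ) (2 * π)

lemma isCompact_Qsq : IsCompact Qsq := isCompact_Icc.prod isCompact_Icc

lemma continuous_Hmap (N : ℕ) (x : Coeff N × Coeff N) : Continuous (Hmap N x) := by
  unfold Hmap curve
  apply Continuous.sub
  · exact ((continuous_coordFun N).comp (continuous_const.prodMk continuous_snd)).prodMk
      ((continuous_coordFun N).comp (continuous_const.prodMk continuous_snd))
  · exact ((continuous_coordFun N).comp (continuous_const.prodMk continuous_fst)).prodMk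
      ((continuous_coordFun N).comp (continuous_const.prodMk continuous_fst))

lemma continuous_Dfun (N : ℕ) (x : Coeff N × Coeff N) : Continuous (Dfun N x) := by
  unfold Dfun
  apply Continuous.sub <;>
  exact (((continuous_coordDeriv N).comp (continuous_const.prodMk continuous_fst)).mul
    ((continuous_coordDeriv N).comp (continuous_const.prodMk continuous_snd)))

/-- key accumulation lemma: an infinite level set of `Hmap` in the square forces a
critical point on the same level. -/
lemma exists_crit_of_infinite (N : ℕ) (x : Coeff N × Coeff N) (v : ℝ × ℝ)
    (h : {p : ℝ × ℝ | p ∈ Set.Ico (0:ℝ) (2*π) ×ˢ Set.Ico (0:ℝ) (2*π) ∧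
      Hmap N x p = v}.Infinite) :
    ∃ p ∈ Qsq, Hmap N x p = v ∧ Dfun N x p = 0 := by
  classical
  set Z := {p : ℝ × ℝ | p ∈ Set.Ico (0:ℝ) (2*π) ×ˢ Set.Ico (0:ℝ) (2*π) ∧
      Hmap N x p = v} with hZ
  have e : ℕ ↪ Z := Set.Infinite.natEmbedding _ h
  set u : ℕ → ℝ × ℝ := fun n => (e n : ℝ × ℝ) with hu
  have huinj : Function.Injective u := fun a b hab => e.injective (Subtype.ext hab)
  have huZ : ∀ n, u n ∈ Z := fun n => (e n).2
  have huQ : ∀ n, u n ∈ Qsq := by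
    intro n
    obtain ⟨⟨h1, h2⟩, -⟩ := huZ n
    exact ⟨⟨h1.1, le_of_lt h1.2⟩, ⟨h2.1, le_of_lt h2.2⟩⟩
  obtain ⟨p₀, hp₀Q, φ, hφ, hlim⟩ := isCompact_Qsq.tendsto_subseq huQ
  have hHv : Hmap N x p₀ = v := by
    have h1 : Filter.Tendsto (fun n => Hmap N x (u (φ n))) Filter.atTop
        (nhds (Hmap N x p₀)) := ((continuous_Hmap N x).continuousAt.tendsto).comp hlim
    have h2 : (fun n => Hmap N x (u (φ n))) = fun _ => v := by
      funext n; exact (huZ (φ n)).2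
    rw [h2] at h1
    exact (tendsto_nhds_unique tendsto_const_nhds h1).symm
  refine ⟨p₀, hp₀Q, hHv, ?_⟩
  by_contra h0
  obtain ⟨s, hs, hinj⟩ := exists_injOn_Hmap N x p₀ h0
  have hev : ∀ᶠ n in Filter.atTop, u (φ n) ∈ s := hlim.eventually_mem hs
  obtain ⟨n₀, hn₀⟩ := hev.exists_forall_of_atTop
  have ha : u (φ n₀) ∈ s := hn₀ n₀ le_rfl
  have hb : u (φ (n₀+1)) ∈ s := hn₀ (n₀+1) (Nat.le_succ _)
  have hne : u (φ n₀) ≠ u (φ (n₀+1)) := by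
    intro hEq
    exact absurd (hφ.injective (huinj hEq)) (by simp)
  apply hne
  apply hinj ha hb
  rw [(huZ (φ n₀)).2, (huZ (φ (n₀+1))).2]

lemma cont_coordFun_aux {N : ℕ} {α : Type*} [TopologicalSpace α] {g : α → HalfCoeff N}
    {t : α → ℝ} (hg : Continuous g) (ht : Continuous t) :
    Continuous (fun a => coordFun N (g a) (t a)) :=
  (continuous_coordFun N).comp (hg.prodMk ht)

lemma cont_coordDeriv_aux {N : ℕ} {α : Type*} [TopologicalSpace α] {g : α → HalfCoeff N}
    {t : α → ℝ} (hg : Continuous g) (ht : Continuous t) :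
    Continuous (fun a => coordDeriv N (g a) (t a)) :=
  (continuous_coordDeriv N).comp (hg.prodMk ht)

/-- the exceptional (non-transversal) set of pairs of curves -/
def Tset (N : ℕ) : Set (Coeff N × Coeff N) :=
  {x | ∃ p ∈ Qsq, Hmap N x p = 0 ∧ Dfun N x p = 0}

lemma continuous_Hmap_joint (N : ℕ) :
    Continuous (fun z : (Coeff N × Coeff N) × (ℝ × ℝ) => Hmap N z.1 z.2) := by
  unfold Hmap curve
  apply Continuous.sub <;>
  · apply Continuous.prodMk <;>
    · exact cont_coordFun_aux (by fun_prop) (by fun_prop)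

lemma continuous_Dfun_joint (N : ℕ) :
    Continuous (fun z : (Coeff N × Coeff N) × (ℝ × ℝ) => Dfun N z.1 z.2) := by
  unfold Dfun
  apply Continuous.sub <;>
  · apply Continuous.mul <;>
    · exact cont_coordDeriv_aux (by fun_prop) (by fun_prop)

lemma isClosed_Tset (N : ℕ) : IsClosed (Tset N) := by
  have : CompactSpace ↥Qsq := isCompact_iff_compactSpace.mp isCompact_Qsq
  have hT : Tset N = Prod.fst ''
      {z : (Coeff N × Coeff N) × ↥Qsq | Hmap N z.1 (z.2 : ℝ × ℝ) = 0 ∧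
        Dfun N z.1 (z.2 : ℝ × ℝ) = 0} := by
    ext x
    constructor
    · rintro ⟨p, hpQ, h1, h2⟩
      exact ⟨(x, ⟨p, hpQ⟩), ⟨h1, h2⟩, rfl⟩
    · rintro ⟨⟨y, p⟩, ⟨h1, h2⟩, rfl⟩
      exact ⟨(p : ℝ × ℝ), p.2, h1, h2⟩
  rw [hT]
  apply isClosedMap_fst_of_compactSpace
  have hc : Continuous (fun z : (Coeff N × Coeff N) × ↥Qsq =>
      ((z.1, (z.2 : ℝ × ℝ)) : (Coeff N × Coeff N) × (ℝ × ℝ))) :=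
    continuous_fst.prodMk (continuous_subtype_val.comp continuous_snd)
  exact (isClosed_eq ((continuous_Hmap_joint N).comp hc) continuous_const).inter
    (isClosed_eq ((continuous_Dfun_joint N).comp hc) continuous_const)

instance volumeProdLeftInvariant {α β : Type*} [MeasureSpace α] [MeasureSpace β]
    [AddGroup α] [AddGroup β] [MeasurableAdd α] [MeasurableAdd β]
    [(volume : Measure α).IsAddLeftInvariant] [(volume : Measure β).IsAddLeftInvariant]
    [SFinite (volume : Measure α)] [SFinite (volume : Measure β)] :
    (volume : Measure (α × β)).IsAddLeftInvariant := by
  rw [Measure.volume_eq_prod]; infer_instance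

instance halfCoeff_leftInvariant (N : ℕ) :
    (volume : Measure (HalfCoeff N)).IsAddLeftInvariant :=
  @volumeProdLeftInvariant _ _ _ _ _ _ _ _ inferInstance inferInstance inferInstance
    inferInstance

instance coeff_leftInvariant (N : ℕ) :
    (volume : Measure (Coeff N)).IsAddLeftInvariant :=
  @volumeProdLeftInvariant _ _ _ _ _ _ _ _ (halfCoeff_leftInvariant N)
    (halfCoeff_leftInvariant N) inferInstance inferInstance

instance coeff2_leftInvariant (N : ℕ) :
    (volume : Measure (Coeff N × Coeff N)).IsAddLeftInvariant :=
  @volumeProdLeftInvariant _ _ _ _ _ _ _ _ (coeff_leftInvariant N)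
    (coeff_leftInvariant N) inferInstance inferInstance

/-- the injection of a translation vector into the coefficient space:
it modifies only the two constant terms of the first curve. -/
def iota (N : ℕ) (v : ℝ × ℝ) : Coeff N × Coeff N :=
  (((fun i => if i = 0 then v.1 else 0, 0), (fun i => if i = 0 then v.2 else 0, 0)),
    ((0, 0), (0, 0)))

lemma continuous_iota (N : ℕ) : Continuous (iota N) := by
  unfold iota
  refine Continuous.prodMk (Continuous.prodMk ?_ ?_) continuous_const
  · refine Continuous.prodMk (continuous_pi fun i => ?_) continuous_const
    by_cases h : i = 0 <;> simp [h] <;> fun_prop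
  · refine Continuous.prodMk (continuous_pi fun i => ?_) continuous_const
    by_cases h : i = 0 <;> simp [h] <;> fun_prop

lemma coordFun_add_const (N : ℕ) (h : HalfCoeff N) (a : ℝ) (t : ℝ) :
    coordFun N (h + ((fun i => if i = 0 then a else 0, 0) : HalfCoeff N)) t =
      coordFun N h t + a := by
  unfold coordFun
  simp only [Prod.fst_add, Prod.snd_add, Pi.add_apply]
  have : ∀ j : Fin N, (if (j.succ : Fin (N+1)) = 0 then a else 0) = 0 := by
    intro j; simp [Fin.succ_ne_zero]
  simp only [this, Pi.zero_apply, add_zero]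
  rw [if_true]
  exact add_right_comm _ _ _

lemma coordDeriv_add_const (N : ℕ) (h : HalfCoeff N) (a : ℝ) (t : ℝ) :
    coordDeriv N (h + ((fun i => if i = 0 then a else 0, 0) : HalfCoeff N)) t =
      coordDeriv N h t := by
  unfold coordDeriv
  simp only [Prod.fst_add, Prod.snd_add, Pi.add_apply]
  have : ∀ j : Fin N, (if (j.succ : Fin (N+1)) = 0 then a else 0) = 0 := by
    intro j; simp [Fin.succ_ne_zero]
  simp only [this, Pi.zero_apply, add_zero]

lemma Hmap_add_iota (N : ℕ) (x : Coeff N × Coeff N) (v : ℝ × ℝ) (p : ℝ × ℝ) :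
    Hmap N (x + iota N v) p = Hmap N x p - v := by
  unfold Hmap curve iota
  simp only [Prod.fst_add, Prod.snd_add, add_zero, Prod.mk_add_mk]
  rw [coordFun_add_const, coordFun_add_const]
  have h2 : x.2 + ((0,0),(0,0)) = x.2 := by simp
  rw [show (x.2.1 + (0,0) : HalfCoeff N) = x.2.1 by simp,
    show (x.2.2 + (0,0) : HalfCoeff N) = x.2.2 by simp]
  ext <;> simp <;> ring

lemma Dfun_add_iota (N : ℕ) (x : Coeff N × Coeff N) (v : ℝ × ℝ) (p : ℝ × ℝ) :
    Dfun N (x + iota N v) p = Dfun N x p := by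
  unfold Dfun iota
  simp only [Prod.fst_add, Prod.snd_add, add_zero]
  rw [coordDeriv_add_const, coordDeriv_add_const,
    show (x.2.1 + (0,0) : HalfCoeff N) = x.2.1 by simp,
    show (x.2.2 + (0,0) : HalfCoeff N) = x.2.2 by simp]

/-- sliced translated set is contained in the image of the critical set. -/
lemma slice_subset (N : ℕ) (x : Coeff N × Coeff N) :
    {v : ℝ × ℝ | x + iota N v ∈ Tset N} ⊆
      Hmap N x '' {p | p ∈ Qsq ∧ Dfun N x p = 0} := by
  rintro v ⟨p, hpQ, h1, h2⟩
  refine ⟨p, ⟨hpQ, ?_⟩, ?_⟩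
  · rwa [Dfun_add_iota] at h2
  · rw [Hmap_add_iota] at h1
    exact (sub_eq_zero.mp h1)

lemma slice_null (N : ℕ) (x : Coeff N × Coeff N) :
    volume {v : ℝ × ℝ | x + iota N v ∈ Tset N} = 0 := by
  apply measure_mono_null (slice_subset N x)
  apply addHaar_image_eq_zero_of_det_fderivWithin_eq_zero volume
    (f' := fun p => Lmap N x p)
  · exact fun p _ => (hasFDerivAt_Hmap N x p).hasFDerivWithinAt
  · intro p hp
    rw [Lmap_det, hp.2, neg_zero]

lemma Tset_null (N : ℕ) : volume (Tset N) = 0 := by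
  have hTm : MeasurableSet (Tset N) := (isClosed_Tset N).measurableSet
  have hm : Measurable (fun q : (ℝ × ℝ) × (Coeff N × Coeff N) => q.2 + iota N q.1) :=
    (continuous_snd.add ((continuous_iota N).comp continuous_fst)).measurable
  set U : Set ((ℝ × ℝ) × (Coeff N × Coeff N)) :=
    (fun q : (ℝ × ℝ) × (Coeff N × Coeff N) => q.2 + iota N q.1) ⁻¹' (Tset N) with hUdef
  have hU : MeasurableSet U := hm hTm
  have e2 : (volume : Measure ((ℝ × ℝ) × (Coeff N × Coeff N))) U = 0 := by
    rw [Measure.volume_eq_prod, Measure.prod_apply_symm hU]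
    have : ∀ x : Coeff N × Coeff N,
        volume ((fun v : ℝ × ℝ => (v, x)) ⁻¹' U) = 0 := by
      intro x
      have : ((fun v : ℝ × ℝ => (v, x)) ⁻¹' U) = {v : ℝ × ℝ | x + iota N v ∈ Tset N} := rfl
      rw [this]
      exact slice_null N x
    simp [this]
  have e1 : (volume : Measure ((ℝ × ℝ) × (Coeff N × Coeff N))) U =
      volume (Tset N) * volume (Set.univ : Set (ℝ × ℝ)) := by
    rw [Measure.volume_eq_prod, Measure.prod_apply hU]
    have : ∀ v : ℝ × ℝ, volume (Prod.mk v ⁻¹' U) = volume (Tset N) := by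
      intro v
      have h1 : (Prod.mk v ⁻¹' U) = (fun x => iota N v + x) ⁻¹' (Tset N) := by
        ext x; simp [hUdef, add_comm]
      rw [h1, measure_preimage_add]
    simp only [this]
    rw [lintegral_const]
  rw [e1] at e2
  have hne : volume (Set.univ : Set (ℝ × ℝ)) ≠ 0 := by
    rw [Measure.volume_eq_prod, ← Set.univ_prod_univ, Measure.prod_prod]
    simp [Real.volume_univ]
  exact (mul_eq_zero.mp e2).resolve_right hne


/-- For almost every pair of curves, the set of intersection parameter pairs
`{(φ,ψ) ∈ [0,2π) × [0,2π) : f(φ) = g(ψ)}` is finite. -/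
theorem ae_finitely_many_intersections (N : ℕ) (hN : 1 ≤ N) :
    ∀ᵐ cd : Coeff N × Coeff N ∂volume, (interParams N cd.1 cd.2).Finite := by
  rw [MeasureTheory.ae_iff]
  apply measure_mono_null _ (Tset_null N)
  intro cd hcd
  have hinf : {p : ℝ × ℝ | p ∈ Set.Ico (0:ℝ) (2*π) ×ˢ Set.Ico (0:ℝ) (2*π) ∧
      Hmap N cd p = 0}.Infinite := by
    have hEq : {p : ℝ × ℝ | p ∈ Set.Ico (0:ℝ) (2*π) ×ˢ Set.Ico (0:ℝ) (2*π) ∧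
        Hmap N cd p = 0} = interParams N cd.1 cd.2 := by
      ext p
      constructor
      · rintro ⟨⟨h1, h2⟩, h3⟩
        exact ⟨h1, h2, (sub_eq_zero.mp h3).symm⟩
      · rintro ⟨h1, h2, h3⟩
        exact ⟨⟨h1, h2⟩, by rw [Hmap, h3, sub_self]⟩
    rw [hEq]
    exact hcd
  obtain ⟨p, hpQ, h1, h2⟩ := exists_crit_of_infinite N cd 0 hinf
  exact ⟨p, hpQ, h1, h2⟩
end
end

section
/- For every integer N ≥ 1, for μ-almost every pair (f,g) ∈ E_N × E_N, the cardinality of the set of intersection points of the two curves, {p ∈ ℝ² : p ∈ range f and p ∈ range g}, equals the cardinality of the set of parameter pairs {(φ,ψ) ∈ [0,2π) × [0,2π) : f(φ) = g(ψ)}. -/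
open MeasureTheory Real
open scoped ENNReal

noncomputable section

/-! ### Auxiliary material for the proof -/

open Module Set
open scoped NNReal

/-- Volume on a binary product of Haar-measure spaces is an additive Haar measure. -/
theorem volume_prod_haar {α β : Type*} [MeasureSpace α] [MeasureSpace β]
    [TopologicalSpace α] [TopologicalSpace β] [AddGroup α] [AddGroup β]
    [IsTopologicalAddGroup α] [IsTopologicalAddGroup β]
    [MeasurableAdd α] [MeasurableAdd β]
    [(volume : Measure α).IsAddHaarMeasure] [(volume : Measure β).IsAddHaarMeasure]
    [SigmaFinite (volume : Measure α)] [SigmaFinite (volume : Measure β)] :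
    (volume : Measure (α × β)).IsAddHaarMeasure := by
  rw [Measure.volume_eq_prod]; infer_instance

instance (N : ℕ) : (volume : Measure (HalfCoeff N)).IsAddHaarMeasure := volume_prod_haar
instance (N : ℕ) : (volume : Measure (Coeff N)).IsAddHaarMeasure := volume_prod_haar
instance (N : ℕ) : (volume : Measure (Coeff N × Coeff N)).IsAddHaarMeasure := volume_prod_haar

/-- An additive Haar measure vanishes on sets of Hausdorff dimension less than the
dimension of the space. -/
lemma haar_null_of_dimH_lt {E : Type*} [NormedAddCommGroup E] [NormedSpace ℝ E]
    [FiniteDimensional ℝ E] [MeasurableSpace E] [BorelSpace E]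
    (μ : Measure E) [μ.IsAddHaarMeasure] {s : Set E}
    (h : dimH s < (finrank ℝ E : ℝ≥0∞)) : μ s = 0 := by
  have hμ := Measure.isAddLeftInvariant_eq_smul μ (μH[finrank ℝ E] : Measure E)
  rw [hμ]
  simp only [Measure.smul_apply, smul_eq_mul]
  have : (μH[(finrank ℝ E : ℝ)] : Measure E) s = 0 := by
    have := hausdorffMeasure_of_dimH_lt (s := s) (d := ((finrank ℝ E : ℕ) : ℝ≥0))
      (by exact_mod_cast h)
    simpa using this
  simp [this]

/-- A submodule has Hausdorff dimension at most its rank. -/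
lemma dimH_submodule_le {E : Type*} [NormedAddCommGroup E] [NormedSpace ℝ E]
    [FiniteDimensional ℝ E] (p : Submodule ℝ E) :
    dimH (p : Set E) ≤ (finrank ℝ ↥p : ℝ≥0∞) := by
  have h1 : (p : Set E) = (Subtype.val) '' (Set.univ : Set ↥p) := by simp
  rw [h1, (isometry_subtype_coe).dimH_image, Real.dimH_univ_eq_finrank]

/-! #### Algebra of `coordFun` -/

lemma coordFun_update_a {N : ℕ} (a : Fin (N+1) → ℝ) (b : Fin N → ℝ) (i : Fin N) (A φ : ℝ) :
    coordFun N (Function.update a i.succ A, b) φ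
      = coordFun N (a, b) φ + (A - a i.succ) * Real.cos (((i : ℕ) + 1 : ℝ) * φ) := by
  unfold coordFun
  simp only [Function.update_of_ne (Fin.succ_ne_zero i).symm]
  have key : ∀ j : Fin N,
      Function.update a i.succ A j.succ * Real.cos (((j : ℕ) + 1 : ℝ) * φ)
        + b j * Real.sin (((j : ℕ) + 1 : ℝ) * φ)
      = (a j.succ * Real.cos (((j : ℕ) + 1 : ℝ) * φ) + b j * Real.sin (((j : ℕ) + 1 : ℝ) * φ))
        + (if j = i then (A - a i.succ) * Real.cos (((i : ℕ) + 1 : ℝ) * φ) else 0) := by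
    intro j
    by_cases h : j = i
    · subst h; simp [Function.update_self]; ring
    · rw [Function.update_of_ne (fun hc => h (Fin.succ_injective _ hc))]
      simp [h]
  simp only [key, Finset.sum_add_distrib, Finset.sum_ite_eq' Finset.univ]
  simp; ring

lemma coordFun_update_b {N : ℕ} (a : Fin (N+1) → ℝ) (b : Fin N → ℝ) (i : Fin N) (B φ : ℝ) :
    coordFun N (a, Function.update b i B) φ
      = coordFun N (a, b) φ + (B - b i) * Real.sin (((i : ℕ) + 1 : ℝ) * φ) := by
  unfold coordFun
  have key : ∀ j : Fin N,
      a j.succ * Real.cos (((j : ℕ) + 1 : ℝ) * φ)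
        + Function.update b i B j * Real.sin (((j : ℕ) + 1 : ℝ) * φ)
      = (a j.succ * Real.cos (((j : ℕ) + 1 : ℝ) * φ) + b j * Real.sin (((j : ℕ) + 1 : ℝ) * φ))
        + (if j = i then (B - b i) * Real.sin (((i : ℕ) + 1 : ℝ) * φ) else 0) := by
    intro j
    by_cases h : j = i
    · subst h; simp [Function.update_self]; ring
    · rw [Function.update_of_ne h]; simp [h]
  simp only [key, Finset.sum_add_distrib, Finset.sum_ite_eq' Finset.univ]
  simp; ring

lemma coordFun_update_a0 {N : ℕ} (a : Fin (N+1) → ℝ) (b : Fin N → ℝ) (B φ : ℝ) :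
    coordFun N (Function.update a 0 B, b) φ = coordFun N (a, b) φ + (B - a 0) := by
  unfold coordFun
  simp only [Function.update_self,
    fun j : Fin N => Function.update_of_ne (Fin.succ_ne_zero j) B a]
  ring

lemma coordFun_periodic {N : ℕ} (h : HalfCoeff N) :
    Function.Periodic (coordFun N h) (2 * π) := by
  intro φ
  unfold coordFun
  congr 1
  apply Finset.sum_congr rfl
  intro j _
  have h1 : ((j : ℕ) + 1 : ℝ) * (φ + 2 * π)
      = ((j : ℕ) + 1 : ℝ) * φ + (((j : ℕ) + 1 : ℤ) : ℝ) * (2 * π) := by push_cast; ring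
  rw [h1, Real.cos_add_int_mul_two_pi, Real.sin_add_int_mul_two_pi]

lemma circle_injOn {φ₁ φ₂ : ℝ} (h1 : φ₁ ∈ Set.Ico 0 (2 * π)) (h2 : φ₂ ∈ Set.Ico 0 (2 * π))
    (hc : Real.cos φ₁ = Real.cos φ₂) (hs : Real.sin φ₁ = Real.sin φ₂) : φ₁ = φ₂ := by
  have : Real.cos (φ₁ - φ₂) = 1 := by
    rw [Real.cos_sub, hc, hs]; rw [← Real.sin_sq_add_cos_sq φ₂]; ring
  have := (Real.cos_eq_one_iff_of_lt_of_lt (by cases h1; cases h2; linarith)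
    (by cases h1; cases h2; linarith)).1 this
  linarith

/-! #### Solving for coefficients -/

def zeroA (N : ℕ) (i : Fin N) (h : HalfCoeff N) : HalfCoeff N := (Function.update h.1 i.succ 0, h.2)
def solveA (N : ℕ) (i : Fin N) (φ₁ φ₂ : ℝ) (h : HalfCoeff N) : HalfCoeff N :=
  (Function.update h.1 i.succ
    (-(coordFun N (zeroA N i h) φ₁ - coordFun N (zeroA N i h) φ₂) /
      (Real.cos (((i : ℕ) + 1 : ℝ) * φ₁) - Real.cos (((i : ℕ) + 1 : ℝ) * φ₂))), h.2)
def zeroB (N : ℕ) (i : Fin N) (h : HalfCoeff N) : HalfCoeff N := (h.1, Function.update h.2 i 0)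
def solveB (N : ℕ) (i : Fin N) (φ₁ φ₂ : ℝ) (h : HalfCoeff N) : HalfCoeff N :=
  (h.1, Function.update h.2 i
    (-(coordFun N (zeroB N i h) φ₁ - coordFun N (zeroB N i h) φ₂) /
      (Real.sin (((i : ℕ) + 1 : ℝ) * φ₁) - Real.sin (((i : ℕ) + 1 : ℝ) * φ₂))))
def zeroC (N : ℕ) (h : HalfCoeff N) : HalfCoeff N := (Function.update h.1 0 0, h.2)
def solveC (N : ℕ) (ψ v : ℝ) (h : HalfCoeff N) : HalfCoeff N :=
  (Function.update h.1 0 (v - coordFun N (zeroC N h) ψ), h.2)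

lemma solveA_eq_self {N : ℕ} {i : Fin N} {φ₁ φ₂ : ℝ} {h : HalfCoeff N}
    (hne : Real.cos (((i : ℕ) + 1 : ℝ) * φ₁) ≠ Real.cos (((i : ℕ) + 1 : ℝ) * φ₂))
    (heq : coordFun N h φ₁ = coordFun N h φ₂) : solveA N i φ₁ φ₂ h = h := by
  have e1 : ∀ φ, coordFun N (zeroA N i h) φ
      = coordFun N h φ + (0 - h.1 i.succ) * Real.cos (((i : ℕ) + 1 : ℝ) * φ) := by
    intro φ; simpa [zeroA] using coordFun_update_a h.1 h.2 i 0 φ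
  unfold solveA
  rw [e1, e1, heq]
  have : -(coordFun N h φ₂ + (0 - h.1 i.succ) * Real.cos (((i:ℕ)+1:ℝ) * φ₁)
      - (coordFun N h φ₂ + (0 - h.1 i.succ) * Real.cos (((i:ℕ)+1:ℝ) * φ₂)))
      = h.1 i.succ * (Real.cos (((i:ℕ)+1:ℝ) * φ₁) - Real.cos (((i:ℕ)+1:ℝ) * φ₂)) := by ring
  rw [this, mul_div_assoc, div_self (sub_ne_zero.2 hne), mul_one, Function.update_eq_self]

lemma solveB_eq_self {N : ℕ} {i : Fin N} {φ₁ φ₂ : ℝ} {h : HalfCoeff N}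
    (hne : Real.sin (((i : ℕ) + 1 : ℝ) * φ₁) ≠ Real.sin (((i : ℕ) + 1 : ℝ) * φ₂))
    (heq : coordFun N h φ₁ = coordFun N h φ₂) : solveB N i φ₁ φ₂ h = h := by
  have e1 : ∀ φ, coordFun N (zeroB N i h) φ
      = coordFun N h φ + (0 - h.2 i) * Real.sin (((i : ℕ) + 1 : ℝ) * φ) := by
    intro φ; simpa [zeroB] using coordFun_update_b h.1 h.2 i 0 φ
  unfold solveB
  rw [e1, e1, heq]
  have : -(coordFun N h φ₂ + (0 - h.2 i) * Real.sin (((i:ℕ)+1:ℝ) * φ₁)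
      - (coordFun N h φ₂ + (0 - h.2 i) * Real.sin (((i:ℕ)+1:ℝ) * φ₂)))
      = h.2 i * (Real.sin (((i:ℕ)+1:ℝ) * φ₁) - Real.sin (((i:ℕ)+1:ℝ) * φ₂)) := by ring
  rw [this, mul_div_assoc, div_self (sub_ne_zero.2 hne), mul_one, Function.update_eq_self]

lemma solveC_eq_self {N : ℕ} {ψ v : ℝ} {h : HalfCoeff N}
    (heq : coordFun N h ψ = v) : solveC N ψ v h = h := by
  have e1 : coordFun N (zeroC N h) ψ = coordFun N h ψ + (0 - h.1 0) := by
    simpa [zeroC] using coordFun_update_a0 h.1 h.2 0 ψ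
  unfold solveC
  rw [e1, heq]
  have : v - (v + (0 - h.1 0)) = h.1 0 := by ring
  rw [this, Function.update_eq_self]

lemma solveA_zero {N : ℕ} (i : Fin N) (φ₁ φ₂ : ℝ) (h : HalfCoeff N) :
    solveA N i φ₁ φ₂ (zeroA N i h) = solveA N i φ₁ φ₂ h := by
  unfold solveA zeroA
  simp [Function.update_idem]

lemma solveB_zero {N : ℕ} (i : Fin N) (φ₁ φ₂ : ℝ) (h : HalfCoeff N) :
    solveB N i φ₁ φ₂ (zeroB N i h) = solveB N i φ₁ φ₂ h := by
  unfold solveB zeroB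
  simp [Function.update_idem]

lemma solveC_zero {N : ℕ} (ψ v : ℝ) (h : HalfCoeff N) :
    solveC N ψ v (zeroC N h) = solveC N ψ v h := by
  unfold solveC zeroC
  simp [Function.update_idem]

/-! #### Chart maps -/

def PhiA (N : ℕ) (i : Fin N) (q : (Coeff N × Coeff N) × ℝ × ℝ × ℝ) : Coeff N × Coeff N :=
  ((solveA N i q.2.1 q.2.2.1 q.1.1.1, solveA N i q.2.1 q.2.2.1 q.1.1.2),
   (solveC N q.2.2.2 (coordFun N (solveA N i q.2.1 q.2.2.1 q.1.1.1) q.2.1) q.1.2.1,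
    solveC N q.2.2.2 (coordFun N (solveA N i q.2.1 q.2.2.1 q.1.1.2) q.2.1) q.1.2.2))

def PhiB (N : ℕ) (i : Fin N) (q : (Coeff N × Coeff N) × ℝ × ℝ × ℝ) : Coeff N × Coeff N :=
  ((solveB N i q.2.1 q.2.2.1 q.1.1.1, solveB N i q.2.1 q.2.2.1 q.1.1.2),
   (solveC N q.2.2.2 (coordFun N (solveB N i q.2.1 q.2.2.1 q.1.1.1) q.2.1) q.1.2.1,
    solveC N q.2.2.2 (coordFun N (solveB N i q.2.1 q.2.2.1 q.1.1.2) q.2.1) q.1.2.2))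

def LamA (N : ℕ) (i : Fin N) : (Coeff N × Coeff N) × ℝ × ℝ × ℝ →ₗ[ℝ] ℝ × ℝ × ℝ × ℝ where
  toFun x := (x.1.1.1.1 i.succ, x.1.1.2.1 i.succ, x.1.2.1.1 0, x.1.2.2.1 0)
  map_add' _ _ := rfl
  map_smul' _ _ := rfl

def LamB (N : ℕ) (i : Fin N) : (Coeff N × Coeff N) × ℝ × ℝ × ℝ →ₗ[ℝ] ℝ × ℝ × ℝ × ℝ where
  toFun x := (x.1.1.1.2 i, x.1.1.2.2 i, x.1.2.1.1 0, x.1.2.2.1 0)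
  map_add' _ _ := rfl
  map_smul' _ _ := rfl

def UA (N : ℕ) (i : Fin N) : Set ((Coeff N × Coeff N) × ℝ × ℝ × ℝ) :=
  {q | Real.cos (((i : ℕ) + 1 : ℝ) * q.2.1) ≠ Real.cos (((i : ℕ) + 1 : ℝ) * q.2.2.1)}
def UB (N : ℕ) (i : Fin N) : Set ((Coeff N × Coeff N) × ℝ × ℝ × ℝ) :=
  {q | Real.sin (((i : ℕ) + 1 : ℝ) * q.2.1) ≠ Real.sin (((i : ℕ) + 1 : ℝ) * q.2.2.1)}

/-- The bad set: a self-intersection of the first curve on top of the second curve. -/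
def Bad (N : ℕ) : Set (Coeff N × Coeff N) :=
  {x | ∃ φ₁ φ₂ ψ : ℝ, φ₁ ∈ Set.Ico 0 (2 * π) ∧ φ₂ ∈ Set.Ico 0 (2 * π) ∧ φ₁ ≠ φ₂ ∧
    curve N x.1 φ₁ = curve N x.1 φ₂ ∧ curve N x.1 φ₁ = curve N x.2 ψ}

lemma bad_subset (N : ℕ) (hN : 1 ≤ N) :
    Bad N ⊆ PhiA N ⟨0, hN⟩ '' ((LinearMap.ker (LamA N ⟨0, hN⟩) : Set _) ∩ UA N ⟨0, hN⟩)
      ∪ PhiB N ⟨0, hN⟩ '' ((LinearMap.ker (LamB N ⟨0, hN⟩) : Set _) ∩ UB N ⟨0, hN⟩) := by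
  set i : Fin N := ⟨0, hN⟩ with hi
  rintro ⟨c, d⟩ ⟨φ₁, φ₂, ψ, h1, h2, hne, hcc, hcd⟩
  have hval : (((i : ℕ) + 1 : ℝ)) = 1 := by simp [hi]
  have hx1 : coordFun N c.1 φ₁ = coordFun N c.1 φ₂ := congrArg Prod.fst hcc
  have hx2 : coordFun N c.2 φ₁ = coordFun N c.2 φ₂ := congrArg Prod.snd hcc
  have hd1 : coordFun N d.1 ψ = coordFun N c.1 φ₁ := (congrArg Prod.fst hcd).symm
  have hd2 : coordFun N d.2 ψ = coordFun N c.2 φ₁ := (congrArg Prod.snd hcd).symm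
  by_cases hcos : Real.cos φ₁ = Real.cos φ₂
  · -- sine chart
    have hsin : Real.sin φ₁ ≠ Real.sin φ₂ := fun hs => hne (circle_injOn h1 h2 hcos hs)
    right
    refine ⟨(((zeroB N i c.1, zeroB N i c.2), (zeroC N d.1, zeroC N d.2)), (φ₁, φ₂, ψ)),
      ⟨?_, ?_⟩, ?_⟩
    · simp [LinearMap.mem_ker, LamB, LinearMap.coe_mk, zeroB, zeroC]
    · simp only [UB, Set.mem_setOf_eq, hval, one_mul]
      exact hsin
    · have hs : ∀ h : HalfCoeff N, coordFun N h φ₁ = coordFun N h φ₂ →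
          solveB N i φ₁ φ₂ (zeroB N i h) = h := fun h hh => (solveB_zero i φ₁ φ₂ h).trans
        (solveB_eq_self (by rw [hval, one_mul, one_mul]; exact hsin) hh)
      show PhiB N i _ = (c, d)
      unfold PhiB
      simp only
      rw [hs c.1 hx1, hs c.2 hx2, solveC_zero, solveC_zero,
        solveC_eq_self hd1, solveC_eq_self hd2]
  · -- cosine chart
    left
    refine ⟨(((zeroA N i c.1, zeroA N i c.2), (zeroC N d.1, zeroC N d.2)), (φ₁, φ₂, ψ)),
      ⟨?_, ?_⟩, ?_⟩
    · simp [LinearMap.mem_ker, LamA, LinearMap.coe_mk, zeroA, zeroC]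
    · simp only [UA, Set.mem_setOf_eq, hval, one_mul]
      exact hcos
    · have hs : ∀ h : HalfCoeff N, coordFun N h φ₁ = coordFun N h φ₂ →
          solveA N i φ₁ φ₂ (zeroA N i h) = h := fun h hh => (solveA_zero i φ₁ φ₂ h).trans
        (solveA_eq_self (by rw [hval, one_mul, one_mul]; exact hcos) hh)
      show PhiA N i _ = (c, d)
      unfold PhiA
      simp only
      rw [hs c.1 hx1, hs c.2 hx2, solveC_zero, solveC_zero,
        solveC_eq_self hd1, solveC_eq_self hd2]

/-! #### Smoothness of the chart maps -/

section smooth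
variable {E : Type*} [NormedAddCommGroup E] [NormedSpace ℝ E]

lemma contDiffAt_update {m : ℕ} {idx : Fin m} {g : E → Fin m → ℝ} {V : E → ℝ} {x : E}
    (hg : ContDiffAt ℝ 1 g x) (hV : ContDiffAt ℝ 1 V x) :
    ContDiffAt ℝ 1 (fun y => Function.update (g y) idx (V y)) x := by
  rw [contDiffAt_pi]
  intro i
  simp only [Function.update_apply]
  by_cases h : i = idx
  · simpa [h] using hV
  · simpa [h] using (contDiffAt_pi.1 hg) i

lemma contDiffAt_coordFun {N : ℕ} {h : E → HalfCoeff N} {φ : E → ℝ} {x : E}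
    (hh : ContDiffAt ℝ 1 h x) (hφ : ContDiffAt ℝ 1 φ x) :
    ContDiffAt ℝ 1 (fun y => coordFun N (h y) (φ y)) x := by
  unfold coordFun
  apply ContDiffAt.add
  · exact (contDiffAt_pi.1 hh.fst) 0
  · apply ContDiffAt.sum
    intro j _
    apply ContDiffAt.add
    · exact ((contDiffAt_pi.1 hh.fst) j.succ).mul
        ((Real.contDiff_cos.contDiffAt).comp x (contDiffAt_const.mul hφ))
    · exact ((contDiffAt_pi.1 hh.snd) j).mul
        ((Real.contDiff_sin.contDiffAt).comp x (contDiffAt_const.mul hφ))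

lemma contDiffAt_zeroA {N : ℕ} {i : Fin N} {h : E → HalfCoeff N} {x : E}
    (hh : ContDiffAt ℝ 1 h x) :
    ContDiffAt ℝ 1 (fun y => zeroA N i (h y)) x :=
  (contDiffAt_update hh.fst contDiffAt_const).prodMk hh.snd

lemma contDiffAt_zeroB {N : ℕ} {i : Fin N} {h : E → HalfCoeff N} {x : E}
    (hh : ContDiffAt ℝ 1 h x) :
    ContDiffAt ℝ 1 (fun y => zeroB N i (h y)) x :=
  hh.fst.prodMk (contDiffAt_update hh.snd contDiffAt_const)

lemma contDiffAt_zeroC {N : ℕ} {h : E → HalfCoeff N} {x : E}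
    (hh : ContDiffAt ℝ 1 h x) :
    ContDiffAt ℝ 1 (fun y => zeroC N (h y)) x :=
  (contDiffAt_update hh.fst contDiffAt_const).prodMk hh.snd

lemma contDiffAt_solveA {N : ℕ} {i : Fin N} {h : E → HalfCoeff N} {φ₁ φ₂ : E → ℝ} {x : E}
    (hh : ContDiffAt ℝ 1 h x) (h1 : ContDiffAt ℝ 1 φ₁ x) (h2 : ContDiffAt ℝ 1 φ₂ x)
    (hne : Real.cos (((i : ℕ) + 1 : ℝ) * φ₁ x) ≠ Real.cos (((i : ℕ) + 1 : ℝ) * φ₂ x)) :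
    ContDiffAt ℝ 1 (fun y => solveA N i (φ₁ y) (φ₂ y) (h y)) x := by
  unfold solveA
  refine ContDiffAt.prodMk
    (contDiffAt_update hh.fst (ContDiffAt.div ?_ ?_ (sub_ne_zero.2 hne))) hh.snd
  · exact ((contDiffAt_coordFun (contDiffAt_zeroA hh) h1).sub
      (contDiffAt_coordFun (contDiffAt_zeroA hh) h2)).neg
  · exact ((Real.contDiff_cos.contDiffAt).comp x (contDiffAt_const.mul h1)).sub
      ((Real.contDiff_cos.contDiffAt).comp x (contDiffAt_const.mul h2))

lemma contDiffAt_solveB {N : ℕ} {i : Fin N} {h : E → HalfCoeff N} {φ₁ φ₂ : E → ℝ} {x : E}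
    (hh : ContDiffAt ℝ 1 h x) (h1 : ContDiffAt ℝ 1 φ₁ x) (h2 : ContDiffAt ℝ 1 φ₂ x)
    (hne : Real.sin (((i : ℕ) + 1 : ℝ) * φ₁ x) ≠ Real.sin (((i : ℕ) + 1 : ℝ) * φ₂ x)) :
    ContDiffAt ℝ 1 (fun y => solveB N i (φ₁ y) (φ₂ y) (h y)) x := by
  unfold solveB
  refine ContDiffAt.prodMk hh.fst
    (contDiffAt_update hh.snd (ContDiffAt.div ?_ ?_ (sub_ne_zero.2 hne)))
  · exact ((contDiffAt_coordFun (contDiffAt_zeroB hh) h1).sub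
      (contDiffAt_coordFun (contDiffAt_zeroB hh) h2)).neg
  · exact ((Real.contDiff_sin.contDiffAt).comp x (contDiffAt_const.mul h1)).sub
      ((Real.contDiff_sin.contDiffAt).comp x (contDiffAt_const.mul h2))

lemma contDiffAt_solveC {N : ℕ} {h : E → HalfCoeff N} {ψ v : E → ℝ} {x : E}
    (hh : ContDiffAt ℝ 1 h x) (hψ : ContDiffAt ℝ 1 ψ x) (hv : ContDiffAt ℝ 1 v x) :
    ContDiffAt ℝ 1 (fun y => solveC N (ψ y) (v y) (h y)) x := by
  unfold solveC
  exact ContDiffAt.prodMk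
    (contDiffAt_update hh.fst (hv.sub (contDiffAt_coordFun (contDiffAt_zeroC hh) hψ))) hh.snd
end smooth

lemma contDiffAt_PhiA {N : ℕ} (i : Fin N) {q : (Coeff N × Coeff N) × ℝ × ℝ × ℝ}
    (hq : q ∈ UA N i) : ContDiffAt ℝ 1 (PhiA N i) q := by
  have hφ₁ : ContDiffAt ℝ 1 (fun q : (Coeff N × Coeff N) × ℝ × ℝ × ℝ => q.2.1) q :=
    contDiffAt_snd.fst
  have hφ₂ : ContDiffAt ℝ 1 (fun q : (Coeff N × Coeff N) × ℝ × ℝ × ℝ => q.2.2.1) q :=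
    contDiffAt_snd.snd.fst
  have hψ : ContDiffAt ℝ 1 (fun q : (Coeff N × Coeff N) × ℝ × ℝ × ℝ => q.2.2.2) q :=
    contDiffAt_snd.snd.snd
  have hs1 := contDiffAt_solveA (i := i) contDiffAt_fst.fst.fst hφ₁ hφ₂ hq
  have hs2 := contDiffAt_solveA (i := i) contDiffAt_fst.fst.snd hφ₁ hφ₂ hq
  exact (hs1.prodMk hs2).prodMk
    ((contDiffAt_solveC contDiffAt_fst.snd.fst hψ (contDiffAt_coordFun hs1 hφ₁)).prodMk
      (contDiffAt_solveC contDiffAt_fst.snd.snd hψ (contDiffAt_coordFun hs2 hφ₁)))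

lemma contDiffAt_PhiB {N : ℕ} (i : Fin N) {q : (Coeff N × Coeff N) × ℝ × ℝ × ℝ}
    (hq : q ∈ UB N i) : ContDiffAt ℝ 1 (PhiB N i) q := by
  have hφ₁ : ContDiffAt ℝ 1 (fun q : (Coeff N × Coeff N) × ℝ × ℝ × ℝ => q.2.1) q :=
    contDiffAt_snd.fst
  have hφ₂ : ContDiffAt ℝ 1 (fun q : (Coeff N × Coeff N) × ℝ × ℝ × ℝ => q.2.2.1) q :=
    contDiffAt_snd.snd.fst
  have hψ : ContDiffAt ℝ 1 (fun q : (Coeff N × Coeff N) × ℝ × ℝ × ℝ => q.2.2.2) q :=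
    contDiffAt_snd.snd.snd
  have hs1 := contDiffAt_solveB (i := i) contDiffAt_fst.fst.fst hφ₁ hφ₂ hq
  have hs2 := contDiffAt_solveB (i := i) contDiffAt_fst.fst.snd hφ₁ hφ₂ hq
  exact (hs1.prodMk hs2).prodMk
    ((contDiffAt_solveC contDiffAt_fst.snd.fst hψ (contDiffAt_coordFun hs1 hφ₁)).prodMk
      (contDiffAt_solveC contDiffAt_fst.snd.snd hψ (contDiffAt_coordFun hs2 hφ₁)))

/-! #### Dimension bounds -/

lemma finrank_total (N : ℕ) : finrank ℝ (Coeff N × Coeff N) = 8 * N + 4 := by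
  simp [Module.finrank_prod, Module.finrank_pi]; ring

lemma finrank_param (N : ℕ) : finrank ℝ ((Coeff N × Coeff N) × ℝ × ℝ × ℝ) = 8 * N + 7 := by
  simp [Module.finrank_prod, Module.finrank_pi]; ring

lemma LamA_surj (N : ℕ) (i : Fin N) : Function.Surjective (LamA N i) := by
  intro v
  exact ⟨((((fun _ => v.1, fun _ => 0), (fun _ => v.2.1, fun _ => 0)),
    ((fun _ => v.2.2.1, fun _ => 0), (fun _ => v.2.2.2, fun _ => 0))), (0, 0, 0)), rfl⟩

lemma LamB_surj (N : ℕ) (i : Fin N) : Function.Surjective (LamB N i) := by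
  intro v
  exact ⟨((((fun _ => 0, fun _ => v.1), (fun _ => 0, fun _ => v.2.1)),
    ((fun _ => v.2.2.1, fun _ => 0), (fun _ => v.2.2.2, fun _ => 0))), (0, 0, 0)), rfl⟩

lemma finrank_ker (N : ℕ) {L : (Coeff N × Coeff N) × ℝ × ℝ × ℝ →ₗ[ℝ] ℝ × ℝ × ℝ × ℝ}
    (hL : Function.Surjective L) : finrank ℝ ↥(LinearMap.ker L) = 8 * N + 3 := by
  have h1 := LinearMap.finrank_range_add_finrank_ker L
  rw [LinearMap.range_eq_top.2 hL, finrank_top, finrank_param] at h1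
  have h2 : finrank ℝ (ℝ × ℝ × ℝ × ℝ) = 4 := by simp [Module.finrank_prod]
  omega

lemma dimH_chart_image {N : ℕ} {L : (Coeff N × Coeff N) × ℝ × ℝ × ℝ →ₗ[ℝ] ℝ × ℝ × ℝ × ℝ}
    (hL : Function.Surjective L) {U : Set ((Coeff N × Coeff N) × ℝ × ℝ × ℝ)}
    {Φ : (Coeff N × Coeff N) × ℝ × ℝ × ℝ → Coeff N × Coeff N}
    (hΦ : ∀ q ∈ U, ContDiffAt ℝ 1 Φ q) :
    dimH (Φ '' ((LinearMap.ker L : Set _) ∩ U)) ≤ ((8 * N + 3 : ℕ) : ℝ≥0∞) := by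
  have h1 : dimH (Φ '' ((LinearMap.ker L : Set _) ∩ U))
      ≤ dimH ((LinearMap.ker L : Set _) ∩ U) := by
    apply dimH_image_le_of_locally_lipschitzOn
    intro x hx
    obtain ⟨C, t, ht, hlip⟩ := (hΦ x hx.2).exists_lipschitzOnWith
    exact ⟨C, t, nhdsWithin_le_nhds ht, hlip⟩
  refine h1.trans ?_
  have h2 : dimH ((LinearMap.ker L : Set _) ∩ U) ≤ dimH (LinearMap.ker L : Set _) :=
    dimH_mono Set.inter_subset_left
  refine h2.trans ?_
  rw [← finrank_ker N hL]
  exact dimH_submodule_le _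

lemma isometry_prod_swap {X : Type*} [PseudoEMetricSpace X] :
    Isometry (Prod.swap : X × X → X × X) := by
  intro a b
  simp only [Prod.edist_eq, Prod.swap]
  exact max_comm _ _

lemma dimH_bad (N : ℕ) (hN : 1 ≤ N) :
    dimH (Bad N ∪ Prod.swap ⁻¹' Bad N) ≤ ((8 * N + 3 : ℕ) : ℝ≥0∞) := by
  have hb : dimH (Bad N) ≤ ((8 * N + 3 : ℕ) : ℝ≥0∞) := by
    refine (dimH_mono (bad_subset N hN)).trans ?_
    rw [dimH_union]
    exact max_le
      (dimH_chart_image (LamA_surj N ⟨0, hN⟩) (fun q hq => contDiffAt_PhiA _ hq))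
      (dimH_chart_image (LamB_surj N ⟨0, hN⟩) (fun q hq => contDiffAt_PhiB _ hq))
  rw [dimH_union]
  refine max_le hb ?_
  have : (Prod.swap ⁻¹' Bad N : Set (Coeff N × Coeff N)) = Prod.swap '' Bad N := by
    rw [Set.image_swap_eq_preimage_swap]
  rw [this, isometry_prod_swap.dimH_image]
  exact hb

/-! #### The good pairs -/

lemma curve_periodic {N : ℕ} (c : Coeff N) : Function.Periodic (curve N c) (2 * π) := by
  intro φ; unfold curve; rw [coordFun_periodic, coordFun_periodic]

lemma exists_param_Ico {N : ℕ} (c : Coeff N) (φ : ℝ) :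
    ∃ φ' ∈ Set.Ico 0 (2 * π), curve N c φ' = curve N c φ := by
  refine ⟨toIcoMod Real.two_pi_pos 0 φ, toIcoMod_mem_Ico' _ _, ?_⟩
  have h := self_sub_toIcoMod Real.two_pi_pos 0 φ
  have : toIcoMod Real.two_pi_pos 0 φ = φ - toIcoDiv Real.two_pi_pos 0 φ • (2 * π) := by
    rw [← h]; ring
  rw [this]
  exact (curve_periodic c).sub_zsmul_eq _

lemma good_encard {N : ℕ} {x : Coeff N × Coeff N} (hA : x ∉ Bad N)
    (hB : Prod.swap x ∉ Bad N) :
    (Set.range (curve N x.1) ∩ Set.range (curve N x.2)).encard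
      = (interParams N x.1 x.2).encard := by
  obtain ⟨c, d⟩ := x
  have himg : (fun p : ℝ × ℝ => curve N c p.1) '' interParams N c d
      = Set.range (curve N c) ∩ Set.range (curve N d) := by
    apply Set.Subset.antisymm
    · rintro _ ⟨p, hp, rfl⟩
      exact ⟨⟨p.1, rfl⟩, ⟨p.2, hp.2.2.symm⟩⟩
    · rintro q ⟨⟨φ, hφ⟩, ⟨ψ, hψ⟩⟩
      obtain ⟨φ', hφ'1, hφ'2⟩ := exists_param_Ico c φ
      obtain ⟨ψ', hψ'1, hψ'2⟩ := exists_param_Ico d ψ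
      exact ⟨(φ', ψ'), ⟨hφ'1, hψ'1, by rw [hφ'2, hψ'2, hφ, hψ]⟩,
        by simpa using hφ'2.trans hφ⟩
  have hinj : Set.InjOn (fun p : ℝ × ℝ => curve N c p.1) (interParams N c d) := by
    rintro p hp q hq heq
    simp only at heq
    have h1 : p.1 = q.1 := by
      by_contra hne
      exact hA ⟨p.1, q.1, p.2, hp.1, hq.1, hne, heq, hp.2.2⟩
    have h2 : p.2 = q.2 := by
      by_contra hne
      refine hB ⟨p.2, q.2, p.1, hp.2.1, hq.2.1, hne, ?_, ?_⟩
      · show curve N d p.2 = curve N d q.2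
        rw [← hp.2.2, ← hq.2.2, ← h1, heq]
      · show curve N d p.2 = curve N c p.1
        exact hp.2.2.symm
    exact Prod.ext h1 h2
  rw [← himg, hinj.encard_image]

/-- For almost every pair of curves, the number of intersection points of the
two curves in ℝ² equals the number of intersection parameter pairs in
`[0,2π) × [0,2π)`. -/
theorem ae_card_intersection_points_eq_card_params (N : ℕ) (hN : 1 ≤ N) :
    ∀ᵐ cd : Coeff N × Coeff N ∂volume,
      (Set.range (curve N cd.1) ∩ Set.range (curve N cd.2)).encard
        = (interParams N cd.1 cd.2).encard := by
  have hvol : volume (Bad N ∪ Prod.swap ⁻¹' Bad N) = 0 := by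
    apply haar_null_of_dimH_lt
    refine (dimH_bad N hN).trans_lt ?_
    rw [finrank_total]
    exact_mod_cast Nat.lt_succ_self _
  rw [MeasureTheory.ae_iff]
  apply measure_mono_null _ hvol
  intro x hx
  by_contra hxu
  exact hx (good_encard (fun h => hxu (Or.inl h)) (fun h => hxu (Or.inr h)))
end
end

section
/- Fix an integer N ≥ 1 and a point U ∈ ℝ². The distance in E_N from the origin to the affine subspace {f ∈ E_N : f(0) = U} equals √(2/(2N+1))·‖U‖; consequently, if ‖U‖ ≤ √((2N+1)/2), the set Λ(U) = {f ∈ E_N : ‖f‖ ≤ 1, f(0) = U} is a closed ball of radius √(1 − 2‖U‖²/(2N+1)) inside that affine subspace, centered at the curve with coefficients a₀ = U₁/(2N+1), a_j = 2U₁/(2N+1), ã₀ = U₂/(2N+1), ã_j = 2U₂/(2N+1) (j = 1,…,N) and all b_j, b̃_j = 0. -/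
open MeasureTheory Real
open scoped ENNReal

noncomputable section

/-- The L₂ norm of a curve. -/
def normL2 (N : ℕ) (c : Coeff N) : ℝ := Real.sqrt (sqNormL2 N c)

/-- The curve with coefficients `a₀ = U₁/(2N+1)`, `a_j = 2U₁/(2N+1)`,
`ã₀ = U₂/(2N+1)`, `ã_j = 2U₂/(2N+1)` (j = 1,…,N) and all `b_j, b̃_j = 0`;
this is the point of the affine subspace `{f : f(0) = U}` closest to the
origin. -/
def lambdaCenter (N : ℕ) (U : ℝ × ℝ) : Coeff N :=
  ((fun i => if i = 0 then U.1 / (2 * N + 1) else 2 * U.1 / (2 * N + 1),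
    fun _ => 0),
   (fun i => if i = 0 then U.2 / (2 * N + 1) else 2 * U.2 / (2 * N + 1),
    fun _ => 0))

lemma sqNormL2_nonneg' (N : ℕ) (c : Coeff N) : 0 ≤ sqNormL2 N c := by
  unfold sqNormL2; positivity

lemma curve_zero_eq (N : ℕ) (c : Coeff N) :
    curve N c 0 = (c.1.1 0 + ∑ j : Fin N, c.1.1 j.succ,
                   c.2.1 0 + ∑ j : Fin N, c.2.1 j.succ) := by
  simp [curve, coordFun, mul_zero]

lemma curve_center (N : ℕ) (U : ℝ × ℝ) : curve N (lambdaCenter N U) 0 = U := by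
  rw [curve_zero_eq]
  simp only [lambdaCenter, Fin.succ_ne_zero, if_neg, if_pos, Finset.sum_const,
    Finset.card_univ, Fintype.card_fin, nsmul_eq_mul]
  have hS : (2 * (N : ℝ) + 1) ≠ 0 := by positivity
  ext <;> simp <;> field_simp <;> ring

lemma key_identity (N : ℕ) (U : ℝ × ℝ) (c : Coeff N) (h : curve N c 0 = U) :
    sqNormL2 N (c - lambdaCenter N U)
      = sqNormL2 N c - 2 * (U.1 ^ 2 + U.2 ^ 2) / (2 * N + 1) := by
  have hS : (2 * (N : ℝ) + 1) ≠ 0 := by positivity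
  rw [curve_zero_eq] at h
  have h1 : c.1.1 0 + ∑ j : Fin N, c.1.1 j.succ = U.1 := congrArg Prod.fst h
  have h2 : c.2.1 0 + ∑ j : Fin N, c.2.1 j.succ = U.2 := congrArg Prod.snd h
  simp only [sqNormL2, lambdaCenter, Prod.fst_sub, Prod.snd_sub, Pi.sub_apply,
    Fin.succ_ne_zero, if_neg, if_pos, sub_zero, ite_true, ite_false,
    reduceCtorEq]
  have hsum : ∀ j : Fin N,
      (c.1.1 j.succ - 2 * U.1 / (2 * N + 1)) ^ 2 + c.1.2 j ^ 2 +
        (c.2.1 j.succ - 2 * U.2 / (2 * N + 1)) ^ 2 + c.2.2 j ^ 2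
      = (c.1.1 j.succ ^ 2 + c.1.2 j ^ 2 + c.2.1 j.succ ^ 2 + c.2.2 j ^ 2)
        - (4 * U.1 / (2 * N + 1)) * c.1.1 j.succ
        - (4 * U.2 / (2 * N + 1)) * c.2.1 j.succ
        + (4 * U.1 ^ 2 / (2 * N + 1) ^ 2 + 4 * U.2 ^ 2 / (2 * N + 1) ^ 2) :=
    fun j => by field_simp; ring
  rw [Finset.sum_congr rfl (fun j _ => hsum j)]
  simp only [Finset.sum_add_distrib, Finset.sum_sub_distrib, ← Finset.mul_sum,
    Finset.sum_const, Finset.card_univ, Fintype.card_fin, nsmul_eq_mul]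
  have e1 : ∑ j : Fin N, c.1.1 j.succ = U.1 - c.1.1 0 := by linarith
  have e2 : ∑ j : Fin N, c.2.1 j.succ = U.2 - c.2.1 0 := by linarith
  rw [e1, e2]
  field_simp
  ring

/-- The distance in `E_N` from the origin to the affine subspace
`{f : f(0) = U}` is `√(2/(2N+1))·‖U‖`; consequently, for `U` in the disc of
radius `√((2N+1)/2)`, the set `Λ(U) = {f : ‖f‖ ≤ 1, f(0) = U}` is the closed
ball of radius `√(1 − 2‖U‖²/(2N+1))` in that affine subspace centered at
`lambdaCenter N U`. -/
theorem dist_to_affine_subspace_and_lambda_ball (N : ℕ) (hN : 1 ≤ N) (U : ℝ × ℝ) :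
    sInf {r : ℝ | ∃ c : Coeff N, curve N c 0 = U ∧ normL2 N c = r}
      = Real.sqrt (2 / (2 * N + 1)) * Real.sqrt (U.1 ^ 2 + U.2 ^ 2) ∧
    (Real.sqrt (U.1 ^ 2 + U.2 ^ 2) ≤ Real.sqrt ((2 * N + 1) / 2) →
      {c : Coeff N | normL2 N c ≤ 1 ∧ curve N c 0 = U}
        = {c : Coeff N | curve N c 0 = U ∧
            normL2 N (c - lambdaCenter N U)
              ≤ Real.sqrt (1 - 2 * (U.1 ^ 2 + U.2 ^ 2) / (2 * N + 1))}) := by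
  have hS0 : (0 : ℝ) < 2 * (N : ℝ) + 1 := by positivity
  have hq0 : sqNormL2 N (lambdaCenter N U - lambdaCenter N U) = 0 := by
    simp [sqNormL2, Prod.fst_sub, Prod.snd_sub, Pi.sub_apply, sub_self]
  have hqc : sqNormL2 N (lambdaCenter N U)
      = 2 * (U.1 ^ 2 + U.2 ^ 2) / (2 * N + 1) := by
    have h := key_identity N U (lambdaCenter N U) (curve_center N U)
    rw [hq0] at h; linarith
  have hval : Real.sqrt (2 * (U.1 ^ 2 + U.2 ^ 2) / (2 * N + 1))
      = Real.sqrt (2 / (2 * N + 1)) * Real.sqrt (U.1 ^ 2 + U.2 ^ 2) := by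
    rw [← Real.sqrt_mul (by positivity)]
    congr 1; ring
  have hmem : Real.sqrt (2 / (2 * N + 1)) * Real.sqrt (U.1 ^ 2 + U.2 ^ 2) ∈
      {r : ℝ | ∃ c : Coeff N, curve N c 0 = U ∧ normL2 N c = r} :=
    ⟨lambdaCenter N U, curve_center N U, by rw [normL2, hqc, hval]⟩
  have hlb : ∀ r ∈ {r : ℝ | ∃ c : Coeff N, curve N c 0 = U ∧ normL2 N c = r},
      Real.sqrt (2 / (2 * N + 1)) * Real.sqrt (U.1 ^ 2 + U.2 ^ 2) ≤ r := by
    rintro r ⟨c, hc, rfl⟩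
    rw [normL2, ← hval]
    apply Real.sqrt_le_sqrt
    have hk := key_identity N U c hc
    have hnn := sqNormL2_nonneg' N (c - lambdaCenter N U)
    linarith
  constructor
  · exact le_antisymm (csInf_le ⟨_, hlb⟩ hmem) (le_csInf ⟨_, hmem⟩ hlb)
  · intro hU
    have hU2 : U.1 ^ 2 + U.2 ^ 2 ≤ (2 * (N : ℝ) + 1) / 2 := by
      have h := pow_le_pow_left₀ (Real.sqrt_nonneg _) hU 2
      rwa [Real.sq_sqrt (by positivity), Real.sq_sqrt (by positivity)] at h
    have hr : (0 : ℝ) ≤ 1 - 2 * (U.1 ^ 2 + U.2 ^ 2) / (2 * N + 1) := by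
      have h : 2 * (U.1 ^ 2 + U.2 ^ 2) / (2 * (N : ℝ) + 1) ≤ 1 :=
        (div_le_one hS0).mpr (by linarith)
      linarith
    ext c
    simp only [Set.mem_setOf_eq]
    constructor
    · rintro ⟨hn, hc⟩
      refine ⟨hc, ?_⟩
      have hk := key_identity N U c hc
      have h1 : sqNormL2 N c ≤ 1 := by
        have h := pow_le_pow_left₀ (Real.sqrt_nonneg (sqNormL2 N c)) hn 2
        rwa [Real.sq_sqrt (sqNormL2_nonneg' N c), one_pow] at h
      rw [normL2]
      exact Real.sqrt_le_sqrt (by linarith)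
    · rintro ⟨hc, hb⟩
      refine ⟨?_, hc⟩
      have hk := key_identity N U c hc
      have hb2 : sqNormL2 N (c - lambdaCenter N U)
          ≤ 1 - 2 * (U.1 ^ 2 + U.2 ^ 2) / (2 * N + 1) := by
        have h := pow_le_pow_left₀ (Real.sqrt_nonneg _) hb 2
        rwa [Real.sq_sqrt (sqNormL2_nonneg' N _), Real.sq_sqrt hr] at h
      rw [normL2, ← Real.sqrt_one]
      exact Real.sqrt_le_sqrt (by linarith)
end
end

section
/- Fix integers N ≥ 1 and r ≥ 0, and let τ_j = 1 + j² + ⋯ + j^{2r} and μ(N) = 1 + 2·Σ_{j=1}^N 1/τ_j. For every φ₀ ∈ ℝ, the set of values {f(φ₀) : f ∈ E_N, ‖f‖_r ≤ 1} is exactly the closed disc in ℝ² of radius √(μ(N)/2) centered at the origin. -/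
open MeasureTheory Real
open scoped ENNReal

noncomputable section

/-- `τ_j = 1 + j² + j⁴ + ⋯ + j^{2r}`. -/
def tau (r j : ℕ) : ℝ := ∑ q ∈ Finset.range (r + 1), (j : ℝ) ^ (2 * q)

/-- Squared Sobolev `W₂^r` norm of a curve:
`2(a₀² + ã₀²) + Σ_{j=1}^N τ_j·(a_j² + b_j² + ã_j² + b̃_j²)`. -/
def sqNormW (N r : ℕ) (c : Coeff N) : ℝ :=
  2 * ((c.1.1 0) ^ 2 + (c.2.1 0) ^ 2) +
    ∑ j : Fin N, tau r ((j : ℕ) + 1) *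
      ((c.1.1 j.succ) ^ 2 + (c.1.2 j) ^ 2 + (c.2.1 j.succ) ^ 2 + (c.2.2 j) ^ 2)

/-- The closed ball `B_r(N,R)` of radius `R` about `0` in the `W₂^r` norm. -/
def ballW (N r : ℕ) (R : ℝ) : Set (Coeff N) := {c | sqNormW N r c ≤ R ^ 2}

/-- `μ(N) = 1 + 2·Σ_{j=1}^N 1/τ_j`. -/
def muW (r N : ℕ) : ℝ := 1 + 2 * ∑ j : Fin N, 1 / tau r ((j : ℕ) + 1)

/-- `λ_r(N)² = Σ_{j=1}^N j²/τ_j`. -/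
def lamSq (r N : ℕ) : ℝ := ∑ j : Fin N, ((j : ℕ) + 1 : ℝ) ^ 2 / tau r ((j : ℕ) + 1)

lemma tau_pos (r j : ℕ) (hj : 0 < j) : 0 < tau r j := by
  unfold tau
  apply Finset.sum_pos
  · intro q _
    positivity
  · exact ⟨0, Finset.mem_range.mpr (Nat.succ_pos r)⟩

lemma tauSum_nonneg (r N : ℕ) : 0 ≤ ∑ j : Fin N, 1 / tau r ((j : ℕ) + 1) := by
  apply Finset.sum_nonneg
  intro j _
  have := tau_pos r ((j:ℕ)+1) (Nat.succ_pos _)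
  positivity

lemma muW_pos (r N : ℕ) : 0 < muW r N := by
  have h := tauSum_nonneg r N
  unfold muW; linarith

/-- Cauchy–Schwarz bound for one coordinate. -/
lemma coord_sq_le (N r : ℕ) (h : HalfCoeff N) (φ : ℝ) :
    (coordFun N h φ) ^ 2 ≤ (muW r N / 2) *
      (2 * (h.1 0) ^ 2 + ∑ j : Fin N, tau r ((j : ℕ) + 1) *
        ((h.1 j.succ) ^ 2 + (h.2 j) ^ 2)) := by
  set f : Fin (N + 1) → ℝ := Fin.cons (Real.sqrt 2 * |h.1 0|)
    (fun j => Real.sqrt (tau r ((j : ℕ) + 1)) *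
      Real.sqrt ((h.1 j.succ) ^ 2 + (h.2 j) ^ 2)) with hf
  set g : Fin (N + 1) → ℝ := Fin.cons (Real.sqrt (1 / 2))
    (fun j => Real.sqrt (1 / tau r ((j : ℕ) + 1))) with hg
  have htau : ∀ j : Fin N, 0 < tau r ((j : ℕ) + 1) :=
    fun j => tau_pos r _ (Nat.succ_pos _)
  -- step A: |coordFun| ≤ ∑ f * g
  have hfg : ∑ i : Fin (N + 1), f i * g i
      = |h.1 0| + ∑ j : Fin N, Real.sqrt ((h.1 j.succ) ^ 2 + (h.2 j) ^ 2) := by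
    rw [show (fun i => f i * g i) = Fin.cons (Real.sqrt 2 * |h.1 0| * Real.sqrt (1/2))
        (fun j => (Real.sqrt (tau r ((j : ℕ) + 1)) *
          Real.sqrt ((h.1 j.succ) ^ 2 + (h.2 j) ^ 2)) * Real.sqrt (1 / tau r ((j : ℕ) + 1)))
        from ?_, Fin.sum_cons]
    · congr 1
      · rw [mul_comm (Real.sqrt 2) _, mul_assoc, ← Real.sqrt_mul (by norm_num)]
        norm_num
      · apply Finset.sum_congr rfl
        intro j _
        have ht := htau j
        rw [mul_comm _ (Real.sqrt (1 / tau r ((j : ℕ) + 1))), ← mul_assoc,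
          ← Real.sqrt_mul (by positivity)]
        rw [one_div, inv_mul_cancel₀ (ne_of_gt ht), Real.sqrt_one, one_mul]
    · funext i
      refine Fin.cases ?_ ?_ i
      · simp [hf, hg]
      · intro j
        simp [hf, hg]
  have habs : |coordFun N h φ| ≤ ∑ i : Fin (N + 1), f i * g i := by
    rw [hfg]
    unfold coordFun
    refine le_trans (abs_add_le _ _) ?_
    gcongr
    refine le_trans (Finset.abs_sum_le_sum_abs _ _) ?_
    apply Finset.sum_le_sum
    intro j _
    have key : (h.1 j.succ * Real.cos (((j : ℕ) + 1 : ℝ) * φ) +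
        h.2 j * Real.sin (((j : ℕ) + 1 : ℝ) * φ)) ^ 2
        ≤ (h.1 j.succ) ^ 2 + (h.2 j) ^ 2 := by
      have hsc := Real.sin_sq_add_cos_sq (((j : ℕ) + 1 : ℝ) * φ)
      nlinarith [sq_nonneg (h.1 j.succ * Real.sin (((j : ℕ) + 1 : ℝ) * φ) -
        h.2 j * Real.cos (((j : ℕ) + 1 : ℝ) * φ))]
    rw [← Real.sqrt_sq_eq_abs]
    exact Real.sqrt_le_sqrt key
  -- step B: Cauchy–Schwarz
  have hCS := Finset.sum_mul_sq_le_sq_mul_sq Finset.univ f g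
  have hfsq : ∑ i : Fin (N + 1), f i ^ 2
      = 2 * (h.1 0) ^ 2 + ∑ j : Fin N, tau r ((j : ℕ) + 1) *
        ((h.1 j.succ) ^ 2 + (h.2 j) ^ 2) := by
    rw [show (fun i => f i ^ 2) = Fin.cons ((Real.sqrt 2 * |h.1 0|) ^ 2)
        (fun j => (Real.sqrt (tau r ((j : ℕ) + 1)) *
          Real.sqrt ((h.1 j.succ) ^ 2 + (h.2 j) ^ 2)) ^ 2) from ?_, Fin.sum_cons]
    · congr 1
      · rw [mul_pow, Real.sq_sqrt (by norm_num), sq_abs]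
      · apply Finset.sum_congr rfl
        intro j _
        rw [mul_pow, Real.sq_sqrt (htau j).le, Real.sq_sqrt (by positivity)]
    · funext i
      refine Fin.cases ?_ ?_ i <;> simp [hf]
  have hgsq : ∑ i : Fin (N + 1), g i ^ 2 = muW r N / 2 := by
    rw [show (fun i => g i ^ 2) = Fin.cons ((Real.sqrt (1/2) : ℝ) ^ 2)
        (fun j => (Real.sqrt (1 / tau r ((j : ℕ) + 1))) ^ 2) from ?_, Fin.sum_cons]
    · rw [Real.sq_sqrt (by norm_num : (0:ℝ) ≤ 1/2)]
      have : ∀ j : Fin N, (Real.sqrt (1 / tau r ((j : ℕ) + 1))) ^ 2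
          = 1 / tau r ((j : ℕ) + 1) := fun j => Real.sq_sqrt (by have := htau j; positivity)
      rw [Finset.sum_congr rfl (fun j _ => this j)]
      unfold muW; ring
    · funext i
      refine Fin.cases ?_ ?_ i <;> simp [hg]
  calc (coordFun N h φ) ^ 2 = |coordFun N h φ| ^ 2 := (sq_abs _).symm
    _ ≤ (∑ i : Fin (N + 1), f i * g i) ^ 2 := by
        apply pow_le_pow_left₀ (abs_nonneg _) habs
    _ ≤ (∑ i : Fin (N + 1), f i ^ 2) * ∑ i : Fin (N + 1), g i ^ 2 := hCS
    _ = (muW r N / 2) * (2 * (h.1 0) ^ 2 + ∑ j : Fin N, tau r ((j : ℕ) + 1) *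
        ((h.1 j.succ) ^ 2 + (h.2 j) ^ 2)) := by rw [hfsq, hgsq]; ring

/-- The extremal coefficient choice realizing value `t` at parameter `φ₀`. -/
def halfOf (N r : ℕ) (φ₀ t : ℝ) : HalfCoeff N :=
  (Fin.cons (t / muW r N)
    (fun j => 2 * t * Real.cos (((j : ℕ) + 1 : ℝ) * φ₀) /
      (muW r N * tau r ((j : ℕ) + 1))),
   fun j => 2 * t * Real.sin (((j : ℕ) + 1 : ℝ) * φ₀) /
      (muW r N * tau r ((j : ℕ) + 1)))

lemma coordFun_halfOf (N r : ℕ) (φ₀ t : ℝ) :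
    coordFun N (halfOf N r φ₀ t) φ₀ = t := by
  unfold coordFun halfOf
  simp only [Fin.cons_zero, Fin.cons_succ]
  have hterm : ∀ j : Fin N,
      2 * t * Real.cos (((j : ℕ) + 1 : ℝ) * φ₀) /
          (muW r N * tau r ((j : ℕ) + 1)) * Real.cos (((j : ℕ) + 1 : ℝ) * φ₀) +
        2 * t * Real.sin (((j : ℕ) + 1 : ℝ) * φ₀) /
          (muW r N * tau r ((j : ℕ) + 1)) * Real.sin (((j : ℕ) + 1 : ℝ) * φ₀)
      = (2 * t / muW r N) * (1 / tau r ((j : ℕ) + 1)) := by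
    intro j
    have hsc := Real.sin_sq_add_cos_sq (((j : ℕ) + 1 : ℝ) * φ₀)
    linear_combination (2 * t / (muW r N * tau r ((j : ℕ) + 1))) * hsc
  rw [Finset.sum_congr rfl (fun j _ => hterm j), ← Finset.mul_sum]
  have hμ : (0:ℝ) < 1 + 2 * ∑ j : Fin N, 1 / tau r ((j : ℕ) + 1) := muW_pos r N
  unfold muW
  set S : ℝ := ∑ j : Fin N, 1 / tau r ((j : ℕ) + 1) with hS
  field_simp

lemma sqNormW_halfOf (N r : ℕ) (φ₀ x y : ℝ) :
    sqNormW N r (halfOf N r φ₀ x, halfOf N r φ₀ y)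
      = 2 * (x ^ 2 + y ^ 2) / muW r N := by
  unfold sqNormW halfOf
  simp only [Fin.cons_zero, Fin.cons_succ]
  have htau : ∀ j : Fin N, tau r ((j : ℕ) + 1) ≠ 0 :=
    fun j => (tau_pos r _ (Nat.succ_pos _)).ne'
  have hμ0 : muW r N ≠ 0 := (muW_pos r N).ne'
  have hterm : ∀ j : Fin N,
      tau r ((j : ℕ) + 1) *
        ((2 * x * Real.cos (((j : ℕ) + 1 : ℝ) * φ₀) /
            (muW r N * tau r ((j : ℕ) + 1))) ^ 2 +
          (2 * x * Real.sin (((j : ℕ) + 1 : ℝ) * φ₀) /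
            (muW r N * tau r ((j : ℕ) + 1))) ^ 2 +
          (2 * y * Real.cos (((j : ℕ) + 1 : ℝ) * φ₀) /
            (muW r N * tau r ((j : ℕ) + 1))) ^ 2 +
          (2 * y * Real.sin (((j : ℕ) + 1 : ℝ) * φ₀) /
            (muW r N * tau r ((j : ℕ) + 1))) ^ 2)
      = (4 * (x ^ 2 + y ^ 2) / muW r N ^ 2) * (1 / tau r ((j : ℕ) + 1)) := by
    intro j
    have hsc := Real.sin_sq_add_cos_sq (((j : ℕ) + 1 : ℝ) * φ₀)
    have ht := htau j
    field_simp
    linear_combination (4 * (x ^ 2 + y ^ 2)) * hsc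
  rw [Finset.sum_congr rfl (fun j _ => hterm j), ← Finset.mul_sum]
  have hμ : (0:ℝ) < 1 + 2 * ∑ j : Fin N, 1 / tau r ((j : ℕ) + 1) := muW_pos r N
  unfold muW at hμ0 ⊢
  set S : ℝ := ∑ j : Fin N, 1 / tau r ((j : ℕ) + 1) with hS
  field_simp
  ring

/-- The set of values at any fixed parameter `φ₀` of the curves in the unit
`W₂^r` ball is exactly the closed disc of radius `√(μ(N)/2)` about the origin
in ℝ². -/
theorem value_set_eq_disc_sobolev (N r : ℕ) (hN : 1 ≤ N) (φ₀ : ℝ) :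
    {v : ℝ × ℝ | ∃ c : Coeff N, sqNormW N r c ≤ 1 ∧ curve N c φ₀ = v}
      = {v : ℝ × ℝ | Real.sqrt (v.1 ^ 2 + v.2 ^ 2) ≤ Real.sqrt (muW r N / 2)} := by
  have hμ := muW_pos r N
  ext v
  simp only [Set.mem_setOf_eq]
  constructor
  · rintro ⟨c, hc, rfl⟩
    apply Real.sqrt_le_sqrt
    have h1 := coord_sq_le N r c.1 φ₀
    have h2 := coord_sq_le N r c.2 φ₀
    have hsplit : sqNormW N r c
        = (2 * (c.1.1 0) ^ 2 + ∑ j : Fin N, tau r ((j : ℕ) + 1) *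
            ((c.1.1 j.succ) ^ 2 + (c.1.2 j) ^ 2))
          + (2 * (c.2.1 0) ^ 2 + ∑ j : Fin N, tau r ((j : ℕ) + 1) *
            ((c.2.1 j.succ) ^ 2 + (c.2.2 j) ^ 2)) := by
      have hs : ∑ j : Fin N, tau r ((j : ℕ) + 1) *
            ((c.1.1 j.succ) ^ 2 + (c.1.2 j) ^ 2 + (c.2.1 j.succ) ^ 2 + (c.2.2 j) ^ 2)
          = (∑ j : Fin N, tau r ((j : ℕ) + 1) * ((c.1.1 j.succ) ^ 2 + (c.1.2 j) ^ 2))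
            + ∑ j : Fin N, tau r ((j : ℕ) + 1) * ((c.2.1 j.succ) ^ 2 + (c.2.2 j) ^ 2) := by
        rw [← Finset.sum_add_distrib]
        exact Finset.sum_congr rfl fun j _ => by ring
      unfold sqNormW
      rw [hs]
      ring
    set Sx := 2 * (c.1.1 0) ^ 2 + ∑ j : Fin N, tau r ((j : ℕ) + 1) *
      ((c.1.1 j.succ) ^ 2 + (c.1.2 j) ^ 2) with hSx
    set Sy := 2 * (c.2.1 0) ^ 2 + ∑ j : Fin N, tau r ((j : ℕ) + 1) *
      ((c.2.1 j.succ) ^ 2 + (c.2.2 j) ^ 2) with hSy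
    have hsum : Sx + Sy ≤ 1 := by rw [← hsplit]; exact hc
    have hone : (muW r N / 2) * (Sx + Sy) ≤ (muW r N / 2) * 1 := by
      apply mul_le_mul_of_nonneg_left hsum (by linarith)
    show (curve N c φ₀).1 ^ 2 + (curve N c φ₀).2 ^ 2 ≤ muW r N / 2
    unfold curve
    dsimp only
    nlinarith [h1, h2, hone]
  · intro hv
    have hP : v.1 ^ 2 + v.2 ^ 2 ≤ muW r N / 2 :=
      (Real.sqrt_le_sqrt_iff (by linarith)).mp hv
    refine ⟨(halfOf N r φ₀ v.1, halfOf N r φ₀ v.2), ?_, ?_⟩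
    · rw [sqNormW_halfOf]
      rw [div_le_one hμ]
      linarith
    · unfold curve
      rw [coordFun_halfOf, coordFun_halfOf]
end
end
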